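/- arXiv:2408.07309 — 2 statements merged into one kernel-verified Lean document; each statement's English description precedes it below -/
import Mathlib

section
/- Let a ≥ 3 be an integer, d = a² − 4 (more generally any positive real with √d = ε − ε⁻¹), ε = (a + √d)/2, and define τ_n = (T_{n+1}(a) + i√d)/T_n(a) in the upper half plane. Let U = [[a,−1],[1,0]] act on the upper half plane by Möbius transformations. Then for all integers n and k, U^k · τ_n = τ_{n+2k}. -/
open Complex

/-- The normalized Chebyshev polynomial of the first kind (indexed by `ℤ`, with
`T (-n) = T n`), characterized by `T n (X + X⁻¹) = X ^ n + X ^ (-n)`. -/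
noncomputable def chebT (n : ℤ) (x : ℝ) : ℝ :=
  2 * (Polynomial.Chebyshev.T ℝ n).eval (x / 2)

/-- Möbius action of a real 2×2 matrix `[[p,q],[r,s]]` on `τ`: `(pτ+q)/(rτ+s)`. -/
noncomputable def moebius (M : Matrix (Fin 2) (Fin 2) ℝ) (τ : ℂ) : ℂ :=
  ((M 0 0 : ℂ) * τ + (M 0 1 : ℂ)) / ((M 1 0 : ℂ) * τ + (M 1 1 : ℂ))

/-! With `a = ε + ε⁻¹` and `√d = ε - ε⁻¹` one has `T_n(a) = εⁿ + ε⁻ⁿ`, and then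
`τ_n = P · (i εⁿ)` for `P = [[ε, ε⁻¹], [1, 1]]`. The columns of `P` are eigenvectors of `U` for the
eigenvalues `ε` and `ε⁻¹`, so `U^k P = P diag(ε^k, ε^(-k))`, and the diagonal matrix acts as
multiplication by `ε^(2k)`, sending `i εⁿ` to `i ε^(n+2k)`. -/

open Polynomial in
theorem chebT_eq_eval_C (n : ℤ) (x : ℝ) : chebT n x = (Chebyshev.C ℝ n).eval x := by
  simp [chebT, Chebyshev.C_eq_two_mul_T_comp_half_mul_X, div_eq_inv_mul]

open Polynomial in
theorem chebT_add_inv {x : ℝ} (hx : x ≠ 0) (n : ℤ) : chebT n (x + x⁻¹) = x ^ n + x ^ (-n) := by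
  have hnat (m : ℕ) : chebT m (x + x⁻¹) = x ^ m + x⁻¹ ^ m := by
    rw [chebT_eq_eval_C, ← dickson_one_one_eq_chebyshev_C]
    exact dickson_one_one_eval_add_inv x x⁻¹ (mul_inv_cancel₀ hx) m
  obtain ⟨m, rfl | rfl⟩ := n.eq_nat_or_neg
  · simp [hnat]
  · rw [chebT_eq_eval_C, Chebyshev.C_neg, ← chebT_eq_eval_C, hnat]
    simp [add_comm]

theorem Matrix.diagonal_zpow {n K : Type*} [Fintype n] [DecidableEq n] [Field K] {d : n → K}
    (hd : ∀ i, d i ≠ 0) (k : ℤ) : Matrix.diagonal d ^ k = Matrix.diagonal (d ^ k) := by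
  have hdet : IsUnit (Matrix.diagonal d).det := by
    simp [Matrix.det_diagonal, Finset.prod_ne_zero_iff, hd]
  obtain ⟨m, rfl | rfl⟩ := k.eq_nat_or_neg
  · simp [Matrix.diagonal_pow]
  · rw [Matrix.zpow_neg hdet, zpow_natCast, Matrix.diagonal_pow]
    refine Matrix.inv_eq_left_inv ?_
    rw [Matrix.diagonal_mul_diagonal, ← Matrix.diagonal_one]
    congr 1
    ext i
    simp [hd i]

theorem moebius_diagonal (d : Fin 2 → ℝ) (τ : ℂ) :
    moebius (Matrix.diagonal d) τ = d 0 / d 1 * τ := by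
  simp only [moebius, Matrix.diagonal_apply_eq, ne_eq, zero_ne_one, one_ne_zero, not_false_eq_true,
    Matrix.diagonal_apply_ne, ofReal_zero, zero_mul, add_zero, zero_add]
  ring

-- Only the inner denominator must be nonzero: if the outer one vanishes, both sides are `0`.
theorem moebius_mul (M N : Matrix (Fin 2) (Fin 2) ℝ) {τ : ℂ}
    (hτ : (N 1 0 : ℂ) * τ + N 1 1 ≠ 0) :
    moebius (M * N) τ = moebius M (moebius N τ) := by
  simp only [moebius, Matrix.mul_apply, Fin.sum_univ_two]
  push_cast
  rw [mul_div_assoc', mul_div_assoc', div_add' _ _ _ hτ, div_add' _ _ _ hτ,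
    div_div_div_cancel_right₀ hτ]
  congr 1 <;> ring

theorem exists_add_inv_eq_and_sub_inv_eq_sqrt {a : ℝ} (ha : 2 ≤ a) :
    ∃ x : ℝ, x ≠ 0 ∧ x + x⁻¹ = a ∧ x - x⁻¹ = √(a ^ 2 - 4) := by
  set s := √(a ^ 2 - 4)
  have hs : s ^ 2 = a ^ 2 - 4 := Real.sq_sqrt (by nlinarith)
  have hinv : ((a + s) / 2)⁻¹ = (a - s) / 2 := by
    refine inv_eq_of_mul_eq_one_right ?_
    linear_combination -hs / 4
  refine ⟨(a + s) / 2, by positivity, ?_, ?_⟩ <;> rw [hinv] <;> ring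

theorem I_mul_ofReal_add_one_ne_zero (y : ℝ) : I * y + 1 ≠ 0 :=
  fun h ↦ by simpa using congrArg re h

theorem moebius_eigenbasis_I_mul_zpow {x : ℝ} (hx : x ≠ 0) (n : ℤ) :
    moebius !![x, x⁻¹; 1, 1] (I * (x ^ n : ℝ)) =
      ((chebT (n + 1) (x + x⁻¹) : ℂ) + I * (x - x⁻¹ : ℝ)) / chebT n (x + x⁻¹) := by
  simp only [chebT_add_inv hx, zpow_add_one₀ hx, zpow_neg]
  have hy : x ^ n ≠ 0 := zpow_ne_zero n hx
  generalize x ^ n = y at hy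
  have hcheb : y + y⁻¹ ≠ 0 := fun h ↦ by
    have : y ^ 2 + 1 = 0 := by field_simp at h; linear_combination h
    nlinarith
  simp only [moebius, Matrix.of_apply, Matrix.cons_val', Matrix.cons_val_zero, Matrix.cons_val_one,
    Matrix.empty_val', Matrix.cons_val_fin_one]
  push_cast
  rw [one_mul, div_eq_div_iff (I_mul_ofReal_add_one_ne_zero y) (by exact_mod_cast hcheb)]
  have hx' : (x : ℂ) ≠ 0 := by exact_mod_cast hx
  have hy' : (y : ℂ) ≠ 0 := by exact_mod_cast hy
  field_simp
  linear_combination (y ^ 2 - (x : ℂ) ^ 2 * y ^ 2) * I_sq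

theorem zpow_moebius_eigenbasis {x : ℝ} (hx : x ≠ 0) (k n : ℤ) :
    moebius (!![x + x⁻¹, -1; 1, 0] ^ k) (moebius !![x, x⁻¹; 1, 1] (I * (x ^ n : ℝ))) =
      moebius !![x, x⁻¹; 1, 1] (I * (x ^ (n + 2 * k) : ℝ)) := by
  have hconj :
      SemiconjBy !![x, x⁻¹; 1, 1] (Matrix.diagonal ![x, x⁻¹]) !![x + x⁻¹, -1; 1, 0] := by
    rw [SemiconjBy, Matrix.diagonal_vec2, Matrix.mul_fin_two, Matrix.mul_fin_two]
    ext i j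
    fin_cases i <;> fin_cases j <;> simp [hx, add_mul]
  have hU : IsUnit (!![x + x⁻¹, -1; 1, 0] : Matrix (Fin 2) (Fin 2) ℝ).det := by
    simp [Matrix.det_fin_two_of]
  have hD : IsUnit (Matrix.diagonal ![x, x⁻¹]).det := by simp [hx]
  have hdiag : ∀ i, ![x, x⁻¹] i ≠ 0 := by simp [Fin.forall_fin_two, hx]
  rw [← moebius_mul _ _ (by simpa using I_mul_ofReal_add_one_ne_zero (x ^ n)),
    ← (Matrix.SemiconjBy.zpow_right hD hU hconj k).eq, Matrix.diagonal_zpow hdiag,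
    moebius_mul _ _ (by simpa using zpow_ne_zero k (ofReal_ne_zero.mpr hx)), moebius_diagonal]
  congr 1
  simp only [Pi.pow_apply, Matrix.cons_val_zero, Matrix.cons_val_one, Matrix.cons_val_fin_one,
    inv_zpow', zpow_neg, ofReal_zpow, ofReal_inv, div_inv_eq_mul, mul_comm 2 k, zpow_add₀ hx,
    zpow_mul, zpow_ofNat, ofReal_mul, ofReal_pow]
  ring

theorem U_zpow_moebius_tau (a : ℤ) (ha : 3 ≤ a) (d : ℝ) (hd : d = (a : ℝ) ^ 2 - 4)
    (U : Matrix (Fin 2) (Fin 2) ℝ) (hU : U = !![(a : ℝ), -1; 1, 0])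
    (τ : ℤ → ℂ)
    (hτ : ∀ n : ℤ, τ n = ((chebT (n + 1) (a : ℝ) : ℂ) + Complex.I * (Real.sqrt d : ℂ))
      / (chebT n (a : ℝ) : ℂ)) (n k : ℤ) :
    moebius (U ^ k) (τ n) = τ (n + 2 * k) := by
  have ha₂ : (2 : ℝ) ≤ a := by exact_mod_cast (by omega : (2 : ℤ) ≤ a)
  obtain ⟨ε, hε, hsum, hdiff⟩ := exists_add_inv_eq_and_sub_inv_eq_sqrt ha₂
  rw [hτ, hτ, hU, hd, ← hdiff, ← hsum, ← moebius_eigenbasis_I_mul_zpow hε,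
    ← moebius_eigenbasis_I_mul_zpow hε, zpow_moebius_eigenbasis hε]
end

section
/- Let a ≥ 3 be an integer and let (x_k, y_k) ∈ (0,1] × [0,1) be a sequence of pairs of rationals satisfying x_{k+1} = ⟨a·x_k + y_k⟩ and y_{k+1} = 1 − x_k, where ⟨r⟩ denotes the unique representative of r mod ℤ in (0,1]. If for some g ≥ 1 the transposed matrix relation (U^T)^g (x_k, y_k)^T ≡ (x_k, y_k)^T (mod ℤ componentwise, with the representative conventions x ∈ (0,1], y ∈ [0,1)) holds for k = 0, then the sequence (x_k, y_k) is periodic with period g: (x_{k+g}, y_{k+g}) = (x_k, y_k) for all k ≥ 0. -/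
/-- `⟨r⟩` is the unique representative of `r` mod `ℤ` lying in `(0, 1]`,
namely `⟨r⟩ = r - ⌈r⌉ + 1`. -/
def upperFract (r : ℚ) : ℚ := r - ⌈r⌉ + 1

/-! Modulo `ℤ²`, one step of the recursion is multiplication by the integer matrix `Uᵀ`, so
`(x_k, y_k) ≡ (Uᵀ)^k (x_0, y_0)`. Hence the hypothesis gives `(x_g, y_g) ≡ (x_0, y_0)`, and since
both pairs lie in the fundamental domain `(0,1] × [0,1)` they are equal. The recursion is a
deterministic map on pairs, so returning to the starting pair after `g` steps makes the whole
sequence `g`-periodic. -/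

open Matrix

namespace AddCommGroup.ModEq

variable {α : Type*} [AddCommGroup α] [LinearOrder α] [IsOrderedAddMonoid α] [Archimedean α]
  {p a b c : α}

theorem eq_of_mem_Ico (hp : 0 < p) (h : b ≡ c [PMOD p]) (hb : b ∈ Set.Ico a (a + p))
    (hc : c ∈ Set.Ico a (a + p)) : b = c := by
  rw [← (toIcoMod_eq_self hp).2 hb, ← (toIcoMod_eq_self hp).2 hc]
  exact h.toIcoMod_eq_toIcoMod hp

theorem eq_of_mem_Ioc (hp : 0 < p) (h : b ≡ c [PMOD p]) (hb : b ∈ Set.Ioc a (a + p))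
    (hc : c ∈ Set.Ioc a (a + p)) : b = c := by
  rw [← (toIocMod_eq_self hp).2 hb, ← (toIocMod_eq_self hp).2 hc]
  exact (toIocMod_eq_toIocMod hp).2 (modEq_iff_zsmul'.1 h)

end AddCommGroup.ModEq

theorem Matrix.exists_pow_mulVec_add_intCast_of_succ {n R : Type*} [Fintype n] [DecidableEq n]
    [Ring R] (N : Matrix n n ℤ) (v : ℕ → n → R)
    (hv : ∀ k, ∃ e : n → ℤ, v (k + 1) = N.map Int.cast *ᵥ v k + Int.cast ∘ e) (k : ℕ) :
    ∃ m : n → ℤ, v k = N.map Int.cast ^ k *ᵥ v 0 + Int.cast ∘ m := by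
  induction k with
  | zero => exact ⟨0, by ext; simp⟩
  | succ k ih =>
    obtain ⟨m, hm⟩ := ih
    obtain ⟨e, he⟩ := hv k
    refine ⟨N *ᵥ m + e, ?_⟩
    have hcast : N.map Int.cast *ᵥ (Int.cast ∘ m : n → R) = Int.cast ∘ (N *ᵥ m) :=
      funext fun i => ((Int.castRingHom R).map_mulVec N m i).symm
    rw [he, hm, mulVec_add, mulVec_mulVec, ← pow_succ', hcast, add_assoc]
    ext i
    simp

theorem Function.apply_add_eq_of_succ {α : Type*} (f : ℕ → α) (F : α → α)
    (hf : ∀ k, f (k + 1) = F (f k)) {g : ℕ} (hg : f g = f 0) (k : ℕ) : f (k + g) = f k := by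
  induction k with
  | zero => simpa using hg
  | succ k ih => rw [Nat.add_right_comm, hf, hf, ih]

/-- The paper's `Uᵀ`. -/
def shintaniMatrix (a : ℤ) : Matrix (Fin 2) (Fin 2) ℤ := !![a, 1; -1, 0]

theorem shintaniMatrix_map_intCast (a : ℤ) :
    (shintaniMatrix a).map (Int.cast : ℤ → ℚ) = !![(a : ℚ), 1; -1, 0] := by
  ext i j
  fin_cases i <;> fin_cases j <;> simp [shintaniMatrix]

theorem vec_upperFract_eq_shintaniMatrix_mulVec_add (a : ℤ) (x y : ℚ) :
    ![upperFract (a * x + y), 1 - x] =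
      (shintaniMatrix a).map Int.cast *ᵥ ![x, y] + Int.cast ∘ ![1 - ⌈a * x + y⌉, 1] := by
  rw [shintaniMatrix_map_intCast]
  ext i
  fin_cases i <;> simp [upperFract] <;> ring

theorem shintani_datum_periodic_general (a : ℤ) (x y : ℕ → ℚ)
    (hx_mem : ∀ k, x k ∈ Set.Ioc (0 : ℚ) 1) (hy_mem : ∀ k, y k ∈ Set.Ico (0 : ℚ) 1)
    (hx : ∀ k, x (k + 1) = upperFract ((a : ℚ) * x k + y k))
    (hy : ∀ k, y (k + 1) = 1 - x k)
    (g : ℕ)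
    (hfix : ∃ p q : ℤ,
      ((!![(a : ℚ), 1; -1, 0]) ^ g).mulVec ![x 0, y 0] = ![x 0 + p, y 0 + q]) :
    ∀ k : ℕ, x (k + g) = x k ∧ y (k + g) = y k := by
  obtain ⟨p, q, hpq⟩ := hfix
  obtain ⟨m, hm⟩ := exists_pow_mulVec_add_intCast_of_succ (shintaniMatrix a)
    (fun k => ![x k, y k]) (fun k => ⟨_, by
      simpa only [hx, hy] using vec_upperFract_eq_shintaniMatrix_mulVec_add a (x k) (y k)⟩) g
  rw [shintaniMatrix_map_intCast, hpq] at hm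
  have hx_modEq : x 0 ≡ x g [PMOD 1] :=
    AddCommGroup.modEq_iff_eq_add_zsmul.2 ⟨p + m 0, by simpa [add_assoc] using congrFun hm 0⟩
  have hy_modEq : y 0 ≡ y g [PMOD 1] :=
    AddCommGroup.modEq_iff_eq_add_zsmul.2 ⟨q + m 1, by simpa [add_assoc] using congrFun hm 1⟩
  have hreturn : (x g, y g) = (x 0, y 0) := Prod.ext
    (hx_modEq.eq_of_mem_Ioc (a := 0) one_pos (by simpa using hx_mem 0)
      (by simpa using hx_mem g)).symm
    (hy_modEq.eq_of_mem_Ico (a := 0) one_pos (by simpa using hy_mem 0)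
      (by simpa using hy_mem g)).symm
  intro k
  simpa using Function.apply_add_eq_of_succ (fun k => (x k, y k))
    (fun z => (upperFract (a * z.1 + z.2), 1 - z.1)) (fun k => by simp [hx, hy]) hreturn k

theorem shintani_datum_periodic (a : ℤ) (ha : 3 ≤ a) (x y : ℕ → ℚ)
    (hx_mem : ∀ k, x k ∈ Set.Ioc (0 : ℚ) 1) (hy_mem : ∀ k, y k ∈ Set.Ico (0 : ℚ) 1)
    (hx : ∀ k, x (k + 1) = upperFract ((a : ℚ) * x k + y k))
    (hy : ∀ k, y (k + 1) = 1 - x k)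
    (g : ℕ) (hg : 1 ≤ g)
    (hfix : ∃ p q : ℤ,
      ((!![(a : ℚ), 1; -1, 0]) ^ g).mulVec ![x 0, y 0] = ![x 0 + p, y 0 + q]) :
    ∀ k : ℕ, x (k + g) = x k ∧ y (k + g) = y k :=
  shintani_datum_periodic_general a x y hx_mem hy_mem hx hy g hfix
end
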